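/- arXiv:2202.00085 — 2 statements merged into one kernel-verified Lean document; each statement's English description precedes it below -/
import Mathlib

section
/- For all natural numbers m, n there exists a natural number s(n,m), depending only on m and n and satisfying s(n+1,m) ≤ s(n,m)·(m+1), such that every pre-Lie ring A with A^{(n)} = 0 and A^m = 0 satisfies A^{[s(n,m)]} = 0. -/
class PreLieRing (A : Type*) extends AddCommGroup A where
  mul : A → A → A
  mul_add : ∀ a b c : A, mul a (b + c) = mul a b + mul a c
  add_mul : ∀ a b c : A, mul (a + b) c = mul a c + mul b c
  left_symm : ∀ x y z : A,
    mul (mul x y) z - mul x (mul y z) = mul (mul y x) z - mul y (mul x z)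

namespace PreLieRing

variable {A : Type*} [PreLieRing A]

/-- The additive subgroup generated by products `a · b` with `a ∈ S`, `b ∈ T`. -/
def subMulSet (S T : Set A) : AddSubgroup A :=
  AddSubgroup.closure {x | ∃ a ∈ S, ∃ b ∈ T, x = mul a b}

def subMul (S T : AddSubgroup A) : AddSubgroup A := subMulSet (S : Set A) (T : Set A)

/-- `leftPow A m` is `A^{m+1}` of the left chain `A^1 = A`, `A^{i+1} = A·A^i`. -/
def leftPow (A : Type*) [PreLieRing A] : ℕ → AddSubgroup A
  | 0 => ⊤
  | m + 1 => subMul ⊤ (leftPow A m)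

/-- `leftIdx A m = A^m` (paper indexing, junk value `A` at `m = 0`). -/
def leftIdx (A : Type*) [PreLieRing A] (m : ℕ) : AddSubgroup A := leftPow A (m - 1)

/-- `rightPow A m` is `A^{(m+1)}` of the right chain `A^{(1)} = A`, `A^{(i+1)} = A^{(i)}·A`. -/
def rightPow (A : Type*) [PreLieRing A] : ℕ → AddSubgroup A
  | 0 => ⊤
  | m + 1 => subMul (rightPow A m) ⊤

def rightIdx (A : Type*) [PreLieRing A] (m : ℕ) : AddSubgroup A := rightPow A (m - 1)

/-- `strongPow A m` is `A^{[m+1]}` of the chain `A^{[1]} = A`,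
`A^{[i+1]} = Σ_{j=1}^{i} A^{[j]}·A^{[i+1-j]}`. -/
def strongPow (A : Type*) [PreLieRing A] : ℕ → AddSubgroup A
  | 0 => ⊤
  | m + 1 => ⨆ j : Fin (m + 1), subMul (strongPow A j) (strongPow A (m - j))
  termination_by m => m
  decreasing_by
  · exact j.isLt
  · exact Nat.lt_succ_of_le (Nat.sub_le m j)

def strongIdx (A : Type*) [PreLieRing A] (m : ℕ) : AddSubgroup A := strongPow A (m - 1)

/-- An ideal of a pre-Lie ring: an additive subgroup absorbing multiplication
on both sides. -/
def IsIdeal (I : AddSubgroup A) : Prop :=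
  (∀ a : A, ∀ i ∈ I, mul i a ∈ I) ∧ (∀ a : A, ∀ i ∈ I, mul a i ∈ I)

end PreLieRing


namespace PreLieRing

variable {A : Type*} [PreLieRing A]

lemma mul_zero' (a : A) : mul a (0:A) = 0 := by
  have h := mul_add a (0:A) 0
  rw [add_zero] at h
  exact add_eq_right.mp h.symm

lemma mul_neg' (a b : A) : mul a (-b) = - mul a b := by
  have h := mul_add a b (-b)
  rw [add_neg_cancel, mul_zero'] at h
  have h' : mul a (-b) + mul a b = 0 := by rw [add_comm]; exact h.symm
  exact eq_neg_of_add_eq_zero_left h'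

lemma mem_subMul {S T : AddSubgroup A} {a b : A} (ha : a ∈ S) (hb : b ∈ T) :
    mul a b ∈ subMul S T :=
  AddSubgroup.subset_closure ⟨a, ha, b, hb, rfl⟩

lemma subMul_le {S T U : AddSubgroup A} (h : ∀ a ∈ S, ∀ b ∈ T, mul a b ∈ U) :
    subMul S T ≤ U := by
  apply (AddSubgroup.closure_le U).2
  rintro x ⟨a, ha, b, hb, rfl⟩
  exact h a ha b hb

lemma subMul_mono {S S' T T' : AddSubgroup A} (h1 : S ≤ S') (h2 : T ≤ T') :
    subMul S T ≤ subMul S' T' :=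
  subMul_le fun a ha b hb => mem_subMul (h1 ha) (h2 hb)

lemma subMul_sup_right {S T U : AddSubgroup A} :
    subMul S (T ⊔ U) ≤ subMul S T ⊔ subMul S U := by
  apply subMul_le
  intro a ha b hb
  obtain ⟨t, ht, u, hu, rfl⟩ := AddSubgroup.mem_sup.mp hb
  rw [mul_add]
  exact add_mem (AddSubgroup.mem_sup_left (mem_subMul ha ht))
    (AddSubgroup.mem_sup_right (mem_subMul ha hu))

lemma mul_mem_of_forall_gen {s : Set A} {U : AddSubgroup A} (x : A)
    (h : ∀ p ∈ s, mul x p ∈ U) {b : A} (hb : b ∈ AddSubgroup.closure s) :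
    mul x b ∈ U := by
  refine AddSubgroup.closure_induction (p := fun b _ => mul x b ∈ U) ?_ ?_ ?_ ?_ hb
  · exact h
  · show mul x (0:A) ∈ U
    rw [mul_zero']; exact zero_mem U
  · intro y z _ _ hy hz
    show mul x (y + z) ∈ U
    rw [mul_add]; exact add_mem hy hz
  · intro y _ hy
    show mul x (-y) ∈ U
    rw [mul_neg']; exact neg_mem hy

lemma rightPow_succ_le (k : ℕ) : rightPow A (k+1) ≤ rightPow A k := by
  induction k with
  | zero =>
    show rightPow A 1 ≤ (⊤ : AddSubgroup A)
    exact le_top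
  | succ j ih =>
    show subMul (rightPow A (j+1)) ⊤ ≤ subMul (rightPow A j) ⊤
    exact subMul_mono ih le_rfl

lemma mul_assoc_expand (x y z : A) :
    mul x (mul y z) = mul (mul x y) z - mul (mul y x) z + mul y (mul x z) := by
  have h := left_symm x y z
  have h2 : mul x (mul y z)
      = mul (mul x y) z - (mul (mul y x) z - mul y (mul x z)) := by
    rw [← h]; abel
  rw [h2]; abel

lemma top_mul_rightPow (k : ℕ) : subMul ⊤ (rightPow A (k+1)) ≤ rightPow A (k+1) := by
  induction k with
  | zero =>
    show subMul ⊤ (subMul ⊤ ⊤) ≤ subMul (⊤ : AddSubgroup A) ⊤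
    apply subMul_le
    intro x _ b hb
    refine mul_mem_of_forall_gen x ?_ hb
    rintro p ⟨y, -, z, -, rfl⟩
    rw [mul_assoc_expand x y z]
    exact add_mem (sub_mem (mem_subMul (AddSubgroup.mem_top _) (AddSubgroup.mem_top _))
        (mem_subMul (AddSubgroup.mem_top _) (AddSubgroup.mem_top _)))
      (mem_subMul (AddSubgroup.mem_top _) (AddSubgroup.mem_top _))
  | succ j ih =>
    show subMul ⊤ (subMul (rightPow A (j+1)) ⊤) ≤ subMul (rightPow A (j+1)) ⊤
    apply subMul_le
    intro x _ b hb
    refine mul_mem_of_forall_gen x ?_ hb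
    rintro p ⟨y, hy, z, -, rfl⟩
    rw [mul_assoc_expand x y z]
    refine add_mem (sub_mem ?_ ?_) ?_
    · exact mem_subMul (ih (mem_subMul (AddSubgroup.mem_top _) hy)) (AddSubgroup.mem_top _)
    · have hyx : mul y x ∈ rightPow A (j+1) :=
        rightPow_succ_le (j+1) (mem_subMul hy (AddSubgroup.mem_top _))
      exact mem_subMul hyx (AddSubgroup.mem_top _)
    · exact mem_subMul hy (AddSubgroup.mem_top _)

lemma strongPow_zero : strongPow A 0 = (⊤ : AddSubgroup A) := by rw [strongPow]

lemma strongPow_succ (m : ℕ) :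
    strongPow A (m+1) = ⨆ j : Fin (m + 1), subMul (strongPow A j) (strongPow A (m - j)) := by
  rw [strongPow]

lemma subMul_strongPow_le (a b : ℕ) :
    subMul (strongPow A a) (strongPow A b) ≤ strongPow A (a+b+1) := by
  rw [strongPow_succ]
  refine le_iSup_of_le ⟨a, by omega⟩ ?_
  have h : a + b - ((⟨a, by omega⟩ : Fin (a+b+1)) : ℕ) = b := by simp
  rw [h]

lemma strongPow_succ_le : ∀ k : ℕ, strongPow A (k+1) ≤ strongPow A k := by
  intro k
  induction k using Nat.strong_induction_on with
  | _ k ih =>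
    match k with
    | 0 => rw [strongPow_zero]; exact le_top
    | k+1 =>
      rw [strongPow_succ (k+1)]
      apply iSup_le
      intro j
      rcases Nat.lt_or_ge (j:ℕ) (k+1) with hj | hj
      · have h1 : strongPow A (k+1-(j:ℕ)) ≤ strongPow A (k-(j:ℕ)) := by
          have he : k + 1 - (j:ℕ) = (k - (j:ℕ)) + 1 := by omega
          rw [he]; exact ih (k - (j:ℕ)) (by omega)
        calc subMul (strongPow A (j:ℕ)) (strongPow A (k+1-(j:ℕ)))
            ≤ subMul (strongPow A (j:ℕ)) (strongPow A (k-(j:ℕ))) := subMul_mono le_rfl h1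
          _ ≤ strongPow A ((j:ℕ) + (k - (j:ℕ)) + 1) := subMul_strongPow_le _ _
          _ = strongPow A (k+1) := by congr 1; omega
      · have hj' : (j:ℕ) = k+1 := by have := j.isLt; omega
        have h1 : strongPow A (j:ℕ) ≤ strongPow A k := by
          rw [hj']; exact ih k (by omega)
        have h2 : (k+1) - (j:ℕ) = 0 := by omega
        rw [h2]
        calc subMul (strongPow A (j:ℕ)) (strongPow A 0)
            ≤ subMul (strongPow A k) (strongPow A 0) := subMul_mono h1 le_rfl
          _ ≤ strongPow A (k + 0 + 1) := subMul_strongPow_le _ _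
          _ = strongPow A (k+1) := by norm_num

lemma strongPow_le_of_le {a b : ℕ} (h : a ≤ b) : strongPow A b ≤ strongPow A a := by
  induction b, h using Nat.le_induction with
  | base => exact le_rfl
  | succ n hn ihn => exact (strongPow_succ_le n).trans ihn

def chain (I : AddSubgroup A) : ℕ → AddSubgroup A
  | 0 => I
  | t+1 => subMul ⊤ (chain I t)

lemma chain_le_leftPow (I : AddSubgroup A) : ∀ t, chain I t ≤ leftPow A t
  | 0 => le_top
  | t+1 => subMul_mono le_rfl (chain_le_leftPow I t)

lemma key (A : Type*) [PreLieRing A] (m n : ℕ) (hm : leftIdx A m = ⊥) :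
    strongIdx A ((m+1)^n) ≤ rightIdx A n := by
  cases m with
  | zero =>
    have hm' : (⊤ : AddSubgroup A) = ⊥ := hm
    exact le_trans (le_trans le_top hm'.le) bot_le
  | succ μ =>
    have hm' : leftPow A μ = ⊥ := hm
    induction n with
    | zero => exact le_top
    | succ p ih =>
      cases p with
      | zero => exact le_top
      | succ q =>
        have hs1 : 1 ≤ (μ+2)^(q+1) := Nat.one_le_pow _ _ (by omega)
        set s : ℕ := (μ+2)^(q+1) with hsdef
        set I : AddSubgroup A := rightPow A q with hIdef
        set J : AddSubgroup A := rightPow A (q+1) with hJdef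
        have hI : strongPow A (s-1) ≤ I := ih
        have hJmul : subMul ⊤ J ≤ J := top_mul_rightPow q
        have P : ∀ k, ∀ N, s*(k+1) - 1 ≤ N → strongPow A N ≤ J ⊔ chain I k := by
          intro k
          induction k with
          | zero =>
            intro N hN
            have h1 : strongPow A N ≤ strongPow A (s-1) :=
              strongPow_le_of_le (by omega)
            exact h1.trans (hI.trans le_sup_right)
          | succ k ihk =>
            intro N hN
            have hsk : s*(k+1+1) = s*(k+1) + s := by ring
            have hble : s * 1 ≤ s * (k+1) := Nat.mul_le_mul_left _ (by omega)
            have hs1' : s * 1 = s := mul_one s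
            obtain ⟨M, rfl⟩ : ∃ M, N = M + 1 := ⟨N - 1, by omega⟩
            rw [strongPow_succ M]
            apply iSup_le
            intro j
            have hjM := j.isLt
            rcases Nat.lt_or_ge (j:ℕ) (s-1) with hj | hj
            · have hM : s*(k+1) - 1 ≤ M - (j:ℕ) := by omega
              have h2 : strongPow A (M - (j:ℕ)) ≤ J ⊔ chain I k := ihk _ hM
              calc subMul (strongPow A (j:ℕ)) (strongPow A (M - (j:ℕ)))
                  ≤ subMul ⊤ (J ⊔ chain I k) := subMul_mono le_top h2
                _ ≤ subMul ⊤ J ⊔ subMul ⊤ (chain I k) := subMul_sup_right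
                _ ≤ J ⊔ chain I (k+1) := sup_le_sup hJmul le_rfl
            · have h1 : strongPow A (j:ℕ) ≤ I := (strongPow_le_of_le hj).trans hI
              refine le_sup_of_le_left ?_
              calc subMul (strongPow A (j:ℕ)) (strongPow A (M - (j:ℕ)))
                  ≤ subMul I ⊤ := subMul_mono h1 le_top
                _ = J := rfl
        have hpow : (μ+2)^(q+2) = s * (μ+2) := by rw [hsdef]; ring
        have hmul1 : s*(μ+1) ≤ s*(μ+2) := Nat.mul_le_mul_left _ (by omega)
        have h2 : chain I μ ≤ ⊥ := (chain_le_leftPow I μ).trans hm'.le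
        calc strongIdx A ((μ+1+1)^(q+1+1)) = strongPow A ((μ+2)^(q+2) - 1) := rfl
          _ ≤ J ⊔ chain I μ := P μ _ (by omega)
          _ ≤ J ⊔ ⊥ := sup_le_sup le_rfl h2
          _ = J := sup_bot_eq J
          _ = rightIdx A (q+1+1) := rfl

end PreLieRing

open PreLieRing in
/-- there is a function `s(n,m)` with `s(n+1,m) ≤ s(n,m)·(m+1)` such that
every pre-Lie ring with `A^{(n)} = 0` and `A^m = 0` satisfies `A^{[s(n,m)]} = 0`. -/
theorem left_right_nilpotent_implies_strong :
    ∃ s : ℕ → ℕ → ℕ,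
      (∀ n m : ℕ, s (n + 1) m ≤ s n m * (m + 1)) ∧
      (∀ (A : Type*) [PreLieRing A] (n m : ℕ),
        rightIdx A n = ⊥ → leftIdx A m = ⊥ → strongIdx A (s n m) = ⊥) := by
  refine ⟨fun n m => (m+1)^n, fun n m => le_of_eq (pow_succ (m+1) n), ?_⟩
  intro A _ n m hr hl
  have h := PreLieRing.key A m n hl
  rw [hr] at h
  exact le_bot_iff.mp h
end

section
/- Let A be a left brace of cardinality p^n with p prime and p > n+1. Then for every natural number i, the set ann(p^i) = {a ∈ A : p^i·a = 0} (elements whose additive order divides p^i) is an ideal of the brace A. -/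
/-!
Fix `x` with `p ^ i • x = 0` and write `λ = λ_x`, `F = λ - 1`, so that `F c = x * c`.
The group `(A, ∘)` has order `p ^ n` and acts on `(A, +)` through `λ`; a nonzero fixed point
of `x` in a nonzero `F`-stable subgroup `B` shows that `F(B) < B`, so the chain `F ^ k (A)`
shrinks by a factor `p` at every step and `F ^ n = 0`.
Now `x^{∘m} = ∑_{j<m} λ^j x` and `∑_{j<p^i} λ^j = ∑_k C(p^i, k+1) F^k = p^i U` with `U` a unit,
because `p ^ i ∣ C(p^i, k+1)` for `k < n < p`. Hence `x^{∘p^i} = U (p^i x) = 0`, so `λ^{p^i} = 1`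
and `p^i U F = λ^{p^i} - 1 = 0`, i.e. `p ^ i • (x * c) = 0`. The remaining ideal conditions
follow from the additivity of `λ_a` and `a ∘ x ∘ a⁻ = λ_a (x + x * a⁻)`.
-/

class LeftBrace (A : Type*) extends AddCommGroup A where
  circ : A → A → A
  circ_assoc : ∀ a b c : A, circ (circ a b) c = circ a (circ b c)
  circ_zero : ∀ a : A, circ a 0 = a
  zero_circ : ∀ a : A, circ 0 a = a
  inv : A → A
  circ_inv : ∀ a : A, circ a (inv a) = 0
  inv_circ : ∀ a : A, circ (inv a) a = 0
  circ_add : ∀ a b c : A, circ a (b + c) + a = circ a b + circ a c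

namespace LeftBrace

variable {A : Type*} [LeftBrace A]

def star (a b : A) : A := circ a b - a - b

def subStarSet (S T : Set A) : AddSubgroup A :=
  AddSubgroup.closure {x | ∃ a ∈ S, ∃ b ∈ T, x = star a b}

def subStar (S T : AddSubgroup A) : AddSubgroup A := subStarSet (S : Set A) (T : Set A)

/-- `leftPow A m` is `A^{m+1}` of the left chain `A^1 = A`, `A^{i+1} = A * A^i`. -/
def leftPow (A : Type*) [LeftBrace A] : ℕ → AddSubgroup A
  | 0 => ⊤
  | m + 1 => subStar ⊤ (leftPow A m)

def leftIdx (A : Type*) [LeftBrace A] (m : ℕ) : AddSubgroup A := leftPow A (m - 1)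

/-- `rightPow A m` is `A^{(m+1)}` of the right chain `A^{(1)} = A`, `A^{(i+1)} = A^{(i)} * A`. -/
def rightPow (A : Type*) [LeftBrace A] : ℕ → AddSubgroup A
  | 0 => ⊤
  | m + 1 => subStar (rightPow A m) ⊤

def rightIdx (A : Type*) [LeftBrace A] (m : ℕ) : AddSubgroup A := rightPow A (m - 1)

def strongPow (A : Type*) [LeftBrace A] : ℕ → AddSubgroup A
  | 0 => ⊤
  | m + 1 => ⨆ j : Fin (m + 1), subStar (strongPow A j) (strongPow A (m - j))
  termination_by m => m
  decreasing_by
  · exact j.isLt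
  · exact Nat.lt_succ_of_le (Nat.sub_le m j)

def strongIdx (A : Type*) [LeftBrace A] (m : ℕ) : AddSubgroup A := strongPow A (m - 1)

/-- An ideal of a left brace, as a subset: closed under the additive group
operations, absorbing under `*` on both sides, and normal in `(A, ∘)`. -/
def IsIdeal (I : Set A) : Prop :=
  (0 : A) ∈ I ∧ (∀ x ∈ I, ∀ y ∈ I, x + y ∈ I) ∧ (∀ x ∈ I, -x ∈ I) ∧
  (∀ a : A, ∀ i ∈ I, star a i ∈ I) ∧ (∀ a : A, ∀ i ∈ I, star i a ∈ I) ∧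
  (∀ a : A, ∀ i ∈ I, circ (circ a i) (inv a) ∈ I)

/-- `circPow a m` is the product of `m` copies of `a` in the group `(A, ∘)`. -/
def circPow (a : A) : ℕ → A
  | 0 => 0
  | m + 1 => circ a (circPow a m)

/-- Membership in the subgroup of `(A, ∘)` generated by a subset. -/
inductive circClosure (S : Set A) : A → Prop
  | of : ∀ x ∈ S, circClosure S x
  | zero : circClosure S 0
  | mul : ∀ x y : A, circClosure S x → circClosure S y → circClosure S (circ x y)
  | inv : ∀ x : A, circClosure S x → circClosure S (inv x)

end LeftBrace

open Finset

theorem Nat.dvd_choose_of_coprime {m k : ℕ} (hk : 0 < k) (hmk : m.Coprime k) :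
    m ∣ m.choose k := by
  obtain _ | m := m
  · simp [Nat.choose_eq_zero_of_lt hk]
  obtain ⟨k, rfl⟩ : ∃ j, k = j + 1 := ⟨k - 1, by omega⟩
  exact hmk.dvd_of_dvd_mul_right ⟨_, (Nat.add_one_mul_choose_eq m k).symm⟩

theorem geom_sum_one_add_eq_sum_choose {R : Type*} [Semiring R] (F : R) (m : ℕ) :
    ∑ j ∈ range m, (1 + F) ^ j = ∑ k ∈ range m, m.choose (k + 1) • F ^ k := by
  induction m with
  | zero => simp
  | succ m ih =>
    have pascal : ∑ k ∈ range (m + 1), (m + 1).choose (k + 1) • F ^ k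
        = ∑ k ∈ range (m + 1), m.choose k • F ^ k
          + ∑ k ∈ range (m + 1), m.choose (k + 1) • F ^ k := by
      simp only [Nat.choose_succ_succ, add_smul, sum_add_distrib]
    rw [geom_sum_succ, ih, pascal, sum_range_succ', sum_range_succ _ m, Nat.choose_succ_self,
      zero_smul, add_zero, add_mul, one_mul, mul_sum]
    simp only [Nat.choose_zero_right, one_smul, pow_zero, pow_succ', mul_smul_comm]
    abel

theorem exists_isUnit_geom_sum_one_add_eq_smul {R : Type*} [Ring R] {p n : ℕ} (hp : p.Prime)
    (hnp : n < p) {F : R} (hF : F ^ n = 0) (i : ℕ) :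
    ∃ U : R, IsUnit U ∧ ∑ j ∈ range (p ^ i), (1 + F) ^ j = p ^ i • U := by
  rw [geom_sum_one_add_eq_sum_choose]
  set m := p ^ i
  have hdvd : ∀ k < n, m ∣ m.choose (k + 1) := fun k hk =>
    Nat.dvd_choose_of_coprime k.succ_pos <| Nat.Coprime.pow_left i <|
      hp.coprime_iff_not_dvd.2 (Nat.not_dvd_of_pos_of_lt k.succ_pos (by omega))
  obtain ⟨m', hm'⟩ : ∃ m', m = m' + 1 :=
    ⟨m - 1, by have := Nat.one_le_pow i p hp.pos; omega⟩
  set V := ∑ k ∈ range m', (m.choose (k + 2) / m) • F ^ k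
  have hFV : Commute F V :=
    Commute.sum_right _ _ _ fun k _ => ((Commute.refl F).pow_right k).smul_right _
  refine ⟨1 + F * V, IsNilpotent.isUnit_one_add ⟨n, by rw [hFV.mul_pow, hF, zero_mul]⟩, ?_⟩
  calc ∑ k ∈ range m, m.choose (k + 1) • F ^ k
      = ∑ k ∈ range m, m • ((m.choose (k + 1) / m) • F ^ k) := by
        refine sum_congr rfl fun k _ => ?_
        obtain hk | hk := lt_or_ge k n
        · rw [smul_smul, Nat.mul_div_cancel' (hdvd k hk)]
        · simp only [pow_eq_zero_of_le hk hF, smul_zero]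
    _ = m • (1 + F * V) := by
        rw [← smul_sum, hm', sum_range_succ', ← hm', Nat.choose_one_right,
          Nat.div_self (by omega), mul_sum]
        simp only [pow_succ', mul_smul_comm, one_smul, pow_zero]
        rw [add_comm _ (1 : R)]

section PGroupAction

variable {p : ℕ} [hp : Fact p.Prime] {G M : Type*} [Group G] [AddCommGroup M]
  [DistribMulAction G M]

theorem IsPGroup.exists_ne_zero_smul_eq_self (hG : IsPGroup p G) (B : AddSubgroup M) [Finite B]
    (hpB : p ∣ Nat.card B) (hB : ∀ g : G, ∀ b ∈ B, g • b ∈ B) :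
    ∃ b ∈ B, b ≠ 0 ∧ ∀ g : G, g • b = b := by
  let S : SubMulAction G M := ⟨B, fun g _ hb => hB g _ hb⟩
  obtain ⟨b, hb, hb0⟩ := hG.exists_fixed_point_of_prime_dvd_card_of_fixed_point (α := S) hpB
    (a := ⟨0, B.zero_mem⟩) fun g => Subtype.ext (smul_zero g)
  exact ⟨b, b.2, fun h => hb0 (Subtype.ext h.symm), fun g => congrArg Subtype.val (hb g)⟩

theorem AddSubgroup.prime_mul_card_dvd_of_lt {n : ℕ} (hM : Nat.card M = p ^ n)
    {B' B : AddSubgroup M} (h : B' < B) : p * Nat.card B' ∣ Nat.card B := by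
  have : Finite M := Nat.finite_of_card_ne_zero (by rw [hM]; exact pow_ne_zero _ hp.out.ne_zero)
  obtain ⟨b, -, hb⟩ := (Nat.dvd_prime_pow hp.out).1 (hM ▸ B.card_addSubgroup_dvd_card)
  obtain ⟨a, hab, ha⟩ := (Nat.dvd_prime_pow hp.out).1 (hb ▸ AddSubgroup.card_dvd_of_le h.le)
  replace hab : a < b := hab.lt_of_ne fun hab =>
    h.ne (AddSubgroup.eq_of_le_of_card_ge h.le (by rw [ha, hb, hab]))
  rw [ha, hb, ← pow_succ']
  exact pow_dvd_pow p hab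

theorem AddSubgroup.map_toAddMonoidEnd_sub_one_lt {n : ℕ} (hG : IsPGroup p G)
    (hM : Nat.card M = p ^ n) (g : G) {B : AddSubgroup M}
    (hB : ∀ h ∈ Subgroup.centralizer {g}, ∀ b ∈ B, h • b ∈ B) (hB0 : B ≠ ⊥) :
    B.map (DistribMulAction.toAddMonoidEnd G M g - 1) < B := by
  set F := DistribMulAction.toAddMonoidEnd G M g - 1
  have : Finite M := Nat.finite_of_card_ne_zero (by rw [hM]; exact pow_ne_zero _ hp.out.ne_zero)
  have hFB : ∀ b ∈ B, F b ∈ B := fun b hb =>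
    sub_mem (hB g (Subgroup.mem_centralizer_singleton_iff.2 rfl) b hb) hb
  refine lt_of_le_of_ne (AddSubgroup.map_le_iff_le_comap.2 hFB) fun hFB_eq => ?_
  have hpB : p ∣ Nat.card B := by
    simpa using AddSubgroup.prime_mul_card_dvd_of_lt hM (bot_lt_iff_ne_bot.2 hB0)
  obtain ⟨b, hbB, hb0, hfix⟩ := (hG.to_subgroup _).exists_ne_zero_smul_eq_self B hpB
    fun (h : Subgroup.centralizer {g}) b hb => hB h h.2 b hb
  have hFb : F b = 0 := sub_eq_zero.2 (hfix ⟨g, Subgroup.mem_centralizer_singleton_iff.2 rfl⟩)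
  -- `F` kills `b ≠ 0`, so it is not injective on `B`, hence not onto `B`
  let F' : B → B := fun y => ⟨F y, hFB y y.2⟩
  have hF' : F'.Surjective := by
    rintro ⟨y, hy⟩
    obtain ⟨z, hz, rfl⟩ := AddSubgroup.mem_map.1 (hFB_eq ▸ hy)
    exact ⟨⟨z, hz⟩, rfl⟩
  have := Finite.injective_iff_surjective.2 hF' (a₁ := ⟨b, hbB⟩) (a₂ := 0)
    (Subtype.ext (by simp [F', hFb]))
  exact hb0 (congrArg Subtype.val this)

theorem IsPGroup.toAddMonoidEnd_sub_one_pow_eq_zero {n : ℕ} (hG : IsPGroup p G)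
    (hM : Nat.card M = p ^ n) (g : G) : (DistribMulAction.toAddMonoidEnd G M g - 1) ^ n = 0 := by
  set F := DistribMulAction.toAddMonoidEnd G M g - 1
  have hcomm : ∀ h ∈ Subgroup.centralizer {g},
      Commute (DistribMulAction.toAddMonoidEnd G M h) F := fun h hh =>
    (Commute.map (Subgroup.mem_centralizer_singleton_iff.1 hh : Commute h g) _).sub_right
      (Commute.one_right _)
  have hchain : ∀ k, (F ^ k).range = ⊥ ∨ p ^ k * Nat.card (F ^ k).range ∣ p ^ n := by
    intro k
    induction k with
    | zero =>
      have hone : (F ^ 0).range = ⊤ := AddMonoidHom.range_eq_top.2 fun b => ⟨b, rfl⟩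
      exact .inr (by rw [hone, AddSubgroup.card_top, hM, pow_zero, one_mul])
    | succ k ih =>
      have hsucc : (F ^ (k + 1)).range = (F ^ k).range.map F := by
        rw [pow_succ']; exact (AddMonoidHom.map_range F (F ^ k)).symm
      by_cases hbot : (F ^ k).range = ⊥
      · exact .inl (by rw [hsucc, hbot]; exact AddSubgroup.map_bot _)
      refine .inr (dvd_trans ?_ (ih.resolve_left hbot))
      rw [hsucc, pow_succ, mul_assoc]
      refine mul_dvd_mul_left _ (AddSubgroup.prime_mul_card_dvd_of_lt hM
        (AddSubgroup.map_toAddMonoidEnd_sub_one_lt hG hM g ?_ hbot))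
      rintro h hh _ ⟨c, rfl⟩
      exact ⟨h • c, DFunLike.congr_fun ((hcomm h hh).pow_right k).eq.symm c⟩
  refine AddMonoidHom.range_eq_bot_iff.1 ((hchain n).elim id fun hdvd => ?_)
  refine AddSubgroup.eq_bot_of_card_eq _ (Nat.eq_one_of_dvd_one ?_)
  exact Nat.dvd_of_mul_dvd_mul_left (pow_pos hp.out.pos n) (by rwa [mul_one])

end PGroupAction

namespace LeftBrace

variable {A : Type*} [LeftBrace A]

def lam (a : A) : AddMonoid.End A where
  toFun b := circ a b - a
  map_zero' := by rw [circ_zero, sub_self]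
  map_add' b c := by
    rw [eq_sub_of_add_eq (circ_add a b c)]
    abel

theorem lam_apply (a b : A) : lam a b = circ a b - a := rfl

theorem circ_eq_add_lam (a b : A) : circ a b = a + lam a b := by
  rw [lam_apply, add_sub_cancel]

theorem star_eq_lam_sub (a b : A) : star a b = lam a b - b := by
  rw [star, lam_apply]

theorem lam_zero : lam (0 : A) = 1 := by
  ext b
  rw [lam_apply, zero_circ, sub_zero]
  rfl

theorem lam_circ (a b : A) : lam (circ a b) = lam a * lam b := by
  ext c
  show lam (circ a b) c = lam a (lam b c)
  rw [lam_apply b, map_sub, lam_apply, lam_apply, lam_apply, circ_assoc]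
  abel

def CircGroup (A : Type*) := A

instance : Group (CircGroup A) where
  mul a b := circ (A := A) a b
  one := (0 : A)
  inv a := inv (A := A) a
  mul_assoc := circ_assoc (A := A)
  one_mul := zero_circ (A := A)
  mul_one := circ_zero (A := A)
  inv_mul_cancel := inv_circ (A := A)

def lamHom : CircGroup A →* AddMonoid.End A where
  toFun a := lam (A := A) a
  map_one' := lam_zero
  map_mul' := lam_circ (A := A)

instance : DistribMulAction (CircGroup A) A := DistribMulAction.compHom A lamHom

theorem lam_circPow (x : A) (m : ℕ) : lam (circPow x m) = lam x ^ m := by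
  induction m with
  | zero => exact lam_zero
  | succ m ih => rw [circPow, lam_circ, ih, pow_succ']

theorem circPow_eq_geom_sum (x : A) (m : ℕ) : circPow x m = (∑ j ∈ range m, lam x ^ j) x := by
  induction m with
  | zero => rfl
  | succ m ih =>
    rw [circPow, circ_eq_add_lam, ih, geom_sum_succ]
    exact add_comm _ _

theorem smul_star_eq_zero_of_smul_eq_zero {p n : ℕ} (hp : p.Prime) (hnp : n < p)
    (hcard : Nat.card A = p ^ n)
    {i : ℕ} {x : A} (hx : p ^ i • x = 0) (c : A) : p ^ i • star x c = 0 := by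
  have : Fact p.Prime := ⟨hp⟩
  have hF : (lam x - 1) ^ n = 0 :=
    (IsPGroup.of_card (G := CircGroup A) hcard).toAddMonoidEnd_sub_one_pow_eq_zero hcard x
  obtain ⟨U, hU, hsum⟩ := exists_isUnit_geom_sum_one_add_eq_smul hp hnp hF i
  rw [add_sub_cancel] at hsum
  have hpow : circPow x (p ^ i) = 0 := by
    rw [circPow_eq_geom_sum, hsum]
    show p ^ i • U x = 0
    rw [← map_nsmul, hx, map_zero]
  have hL : lam x ^ p ^ i = 1 := by rw [← lam_circPow, hpow, lam_zero]
  have hmF : p ^ i • (lam x - 1) = 0 := hU.mul_right_injective <| by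
    show U * _ = U * 0
    rw [mul_zero, mul_smul_comm, ← smul_mul_assoc, ← hsum, geom_sum_mul, hL, sub_self]
  rw [star_eq_lam_sub]
  exact DFunLike.congr_fun hmF c

theorem circ_circ_inv (a x : A) : circ (circ a x) (inv a) = lam a (x + star x (inv a)) := by
  have ha : lam a (inv a) = -a :=
    eq_neg_of_add_eq_zero_right (by rw [← circ_eq_add_lam, circ_inv])
  rw [circ_assoc, circ_eq_add_lam, circ_eq_add_lam x, star_eq_lam_sub, map_add, map_add, map_sub,
    ha]
  abel

theorem isIdeal_of_lam_mem_of_star_mem (B : AddSubgroup A) (hlam : ∀ a, ∀ x ∈ B, lam a x ∈ B)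
    (hstar : ∀ a, ∀ x ∈ B, star x a ∈ B) : IsIdeal (B : Set A) :=
  ⟨B.zero_mem, fun _ hx _ hy => B.add_mem hx hy, fun _ hx => B.neg_mem hx,
    fun a x hx => star_eq_lam_sub a x ▸ B.sub_mem (hlam a x hx) hx, hstar,
    fun a x hx => circ_circ_inv a x ▸ hlam a _ (B.add_mem hx (hstar _ x hx))⟩

end LeftBrace

open LeftBrace in
theorem ann_isIdeal_general (p n : ℕ) (hp : p.Prime) (hpn : n + 1 < p)
    (A : Type*) [LeftBrace A] (hcard : Nat.card A = p ^ n) (i : ℕ) :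
    IsIdeal {a : A | p ^ i • a = 0} := by
  have hker : {a : A | p ^ i • a = 0} = (DistribSMul.toAddMonoidHom A (p ^ i)).ker := by
    ext; simp
  rw [hker]
  refine isIdeal_of_lam_mem_of_star_mem _ (fun a x hx => ?_) fun a x hx => ?_
  · simpa [← map_nsmul] using congrArg (lam a) hx
  · simpa using smul_star_eq_zero_of_smul_eq_zero hp (by omega) hcard hx a

open LeftBrace in
/-- in a left brace of cardinality `p^n` with `p > n+1` prime, the
set of elements killed by `p^i` is an ideal, for every `i`. -/
theorem ann_isIdeal (p n : ℕ) (hp : p.Prime) (hpn : n + 1 < p)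
    (A : Type*) [LeftBrace A] [Fintype A] (hcard : Nat.card A = p ^ n) (i : ℕ) :
    IsIdeal {a : A | p ^ i • a = 0} :=
  ann_isIdeal_general p n hp hpn A hcard i
end
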